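/- arXiv:2107.02571 — 3 statements merged into one kernel-verified Lean document; each statement's English description precedes it below -/
import Mathlib

section
/- Let λ ∈ ℝ with λ ≠ 0, x ∈ ℝ, and let t ∈ ℝ satisfy |t| < 1 and |λ·x·t| < 1 − |t|. Then the series Σ_{n=0}^∞ ((1/n!)·Σ_{k=0}^{n} (−x)^k·(1)_{k,λ}·L(n,k))·t^n converges with sum (1 − λ·x·t/(1 − t))^{1/λ}; that is, the coefficient of t^n in the expansion of e_λ(−xt/(1−t)) is (1/n!)·Σ_{k=0}^{n} (−x)^k·(1)_{k,λ}·L(n,k). -/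
/-!
By the binomial series, `e_λ(u) = (1 + λu)^{1/λ} = ∑ₖ (1)_{k,λ} uᵏ / k!` for `|λu| < 1`, since
`(1)_{k,λ} / k! = λᵏ (1/λ choose k)`. The Lah numbers are the coefficients of
`(t/(1-t))ᵏ / k! = ∑ₙ L(n,k) tⁿ / n!`. Substituting `u = -x t/(1-t)` gives a double series in
`(k, n)`; the hypothesis `|λxt| < 1 - |t|` makes it absolutely convergent (the same computation
with `|t|` in place of `t`), so it may be summed along the diagonals `n = const`.
-/

/-- The degenerate falling factorial `(1)_{m,λ} = ∏_{j=0}^{m-1} (1 - jλ)`. -/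
noncomputable def degFall (lam : ℝ) (m : ℕ) : ℝ :=
  ∏ j ∈ Finset.range m, (1 - (j : ℝ) * lam)

/-- The Lah numbers: `L(n,k) = C(n−1,k−1)·n!/k!` for `1 ≤ k ≤ n`, with
`L(0,0) = 1` and `L(n,0) = 0` for `n ≥ 1`. -/
noncomputable def lah (n k : ℕ) : ℝ :=
  if k = 0 then (if n = 0 then 1 else 0)
  else (Nat.choose (n - 1) (k - 1) : ℝ) * (Nat.factorial n : ℝ) / (Nat.factorial k : ℝ)

open Finset Nat

namespace Real

theorem hasSum_choose_mul_pow (a : ℝ) {y : ℝ} (hy : |y| < 1) :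
    HasSum (fun n ↦ Ring.choose a n * y ^ n) ((1 + y) ^ a) := by
  have hy' : y ∈ Metric.eball 0 1 := by simpa [Metric.mem_eball, edist_dist] using hy
  simpa [binomialSeries, mul_comm] using one_add_rpow_hasFPowerSeriesOnBall_zero.hasSum hy'

theorem summable_abs_choose_mul_pow (a : ℝ) {y : ℝ} (hy : |y| < 1) :
    Summable fun n ↦ |Ring.choose a n * y ^ n| := by
  have hy' : y ∈ Metric.eball 0 (binomialSeries ℝ a).radius :=
    Metric.mem_eball.mpr <|
      lt_of_lt_of_le (by simpa [edist_dist] using hy) binomialSeries_radius_ge_one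
  simpa [binomialSeries, mul_comm] using (binomialSeries ℝ a).summable_norm_apply hy'

end Real

theorem HasSum.sum_antidiagonal {A M : Type*} [AddCommMonoid A] [HasAntidiagonal A]
    [AddCommMonoid M] [TopologicalSpace M] [ContinuousAdd M] [RegularSpace M]
    {f : A × A → M} {a : M} (hf : HasSum f a) :
    HasSum (fun n ↦ ∑ p ∈ antidiagonal n, f p) a :=
  (HasAntidiagonal.sigmaAntidiagonalEquivProd.hasSum_iff.mpr hf).sigma fun n ↦ by
    rw [← sum_coe_sort]
    exact hasSum_fintype _

theorem hasSum_prod_of_hasSum_rows {β γ : Type*} {f : β × γ → ℝ} {r R : β → ℝ} {A : ℝ}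
    (hrow : ∀ b, HasSum (fun c ↦ f (b, c)) (r b)) (hr : HasSum r A)
    (habsrow : ∀ b, HasSum (fun c ↦ |f (b, c)|) (R b)) (hR : Summable R) : HasSum f A := by
  have habs : Summable fun p ↦ |f p| := by
    rw [summable_prod_of_nonneg fun p ↦ abs_nonneg (f p)]
    exact ⟨fun b ↦ (habsrow b).summable, by simpa only [(habsrow _).tsum_eq] using hR⟩
  have hf := (summable_abs_iff.mp habs).hasSum
  rwa [← hr.unique (hf.prod_fiberwise hrow)] at hf

theorem degFall_eq_factorial_mul_choose {lam : ℝ} (hlam : lam ≠ 0) (k : ℕ) :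
    degFall lam k = k ! * Ring.choose (1 / lam) k * lam ^ k := by
  have hprod : (descPochhammer ℤ k).smeval (1 / lam) = ∏ j ∈ range k, (1 / lam - j) := by
    rw [← descPochhammer_eval_eq_prod_range, ← descPochhammer_map (algebraMap ℤ ℝ),
      Polynomial.eval_map_algebraMap, Polynomial.aeval_eq_smeval]
  rw [Ring.choose_eq_smul, smul_eq_mul, hprod, degFall,
    show lam ^ k = ∏ _j ∈ range k, lam by simp, ← mul_assoc, mul_inv_cancel₀ (by positivity),
    one_mul, ← prod_mul_distrib]
  refine prod_congr rfl fun j _ ↦ ?_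
  field_simp

theorem degFall_div_factorial_mul_pow {lam : ℝ} (hlam : lam ≠ 0) (k : ℕ) (u : ℝ) :
    degFall lam k / k ! * u ^ k = Ring.choose (1 / lam) k * (lam * u) ^ k := by
  rw [degFall_eq_factorial_mul_choose hlam, mul_pow]
  field_simp

theorem hasSum_degFall_div_factorial_mul_pow {lam u : ℝ} (hlam : lam ≠ 0)
    (hu : |lam * u| < 1) :
    HasSum (fun k ↦ degFall lam k / k ! * u ^ k) ((1 + lam * u) ^ (1 / lam)) := by
  simpa only [degFall_div_factorial_mul_pow hlam] using Real.hasSum_choose_mul_pow _ hu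

theorem summable_abs_degFall_div_factorial_mul_pow {lam u : ℝ} (hlam : lam ≠ 0)
    (hu : |lam * u| < 1) :
    Summable fun k ↦ |degFall lam k / k ! * u ^ k| := by
  simpa only [degFall_div_factorial_mul_pow hlam] using Real.summable_abs_choose_mul_pow _ hu

theorem lah_nonneg (n k : ℕ) : 0 ≤ lah n k := by
  unfold lah
  split_ifs <;> positivity

theorem lah_succ_add_div_factorial (j m : ℕ) :
    lah (j + 1 + m) (j + 1) / (j + 1 + m)! = (m + j).choose j / (j + 1)! := by
  rw [lah, if_neg j.succ_ne_zero, show j + 1 + m - 1 = m + j by omega, Nat.add_sub_cancel]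
  field_simp

/-- Indexed from `n = k` on, because truncated subtraction makes `lah 0 1 = 1`. -/
theorem hasSum_lah_div_factorial_mul_pow (k : ℕ) {t : ℝ} (ht : |t| < 1) :
    HasSum (fun m ↦ lah (k + m) k / (k + m)! * t ^ (k + m)) ((t / (1 - t)) ^ k / k !) := by
  cases k with
  | zero =>
    convert hasSum_ite_eq 0 (1 : ℝ) using 2 with m
    · rcases m with _ | m <;> simp [lah]
    · simp
  | succ j =>
    have h := (hasSum_choose_mul_geometric_of_norm_lt_one j (r := t)
      (by rwa [Real.norm_eq_abs])).mul_left (t ^ (j + 1) / (j + 1)!)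
    rw [show t ^ (j + 1) / (j + 1)! * (1 / (1 - t) ^ (j + 1)) =
      (t / (1 - t)) ^ (j + 1) / (j + 1)! by rw [div_pow]; ring] at h
    refine h.congr_fun fun m ↦ ?_
    rw [lah_succ_add_div_factorial, pow_add]
    ring

theorem hasSum_lah_of_hasSum_div_one_sub {b : ℕ → ℝ} {t A : ℝ} (ht : |t| < 1)
    (hA : HasSum (fun k ↦ b k / k ! * (t / (1 - t)) ^ k) A)
    (habs : Summable fun k ↦ |b k| / k ! * (|t| / (1 - |t|)) ^ k) :
    HasSum (fun n ↦ (1 / n ! * ∑ k ∈ range (n + 1), b k * lah n k) * t ^ n) A := by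
  set f : ℕ × ℕ → ℝ := fun p ↦ b p.1 * (lah (p.1 + p.2) p.1 / (p.1 + p.2)! * t ^ (p.1 + p.2))
  have hrow (k : ℕ) : HasSum (fun m ↦ f (k, m)) (b k / k ! * (t / (1 - t)) ^ k) := by
    rw [div_mul_eq_mul_div, mul_div_assoc]
    exact (hasSum_lah_div_factorial_mul_pow k ht).mul_left (b k)
  have habsrow (k : ℕ) :
      HasSum (fun m ↦ |f (k, m)|) (|b k| / k ! * (|t| / (1 - |t|)) ^ k) := by
    rw [div_mul_eq_mul_div, mul_div_assoc]
    have h := (hasSum_lah_div_factorial_mul_pow k (t := |t|) (by rwa [abs_abs])).mul_left |b k|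
    refine h.congr_fun fun m ↦ ?_
    simp only [f, abs_mul, abs_pow, abs_div, abs_of_nonneg (lah_nonneg _ _), Nat.abs_cast]
  refine (hasSum_prod_of_hasSum_rows hrow hA habsrow habs).sum_antidiagonal.congr_fun fun n ↦ ?_
  rw [Nat.sum_antidiagonal_eq_sum_range_succ_mk, mul_sum, sum_mul]
  refine sum_congr rfl fun k hk ↦ ?_
  have hkn : k + (n - k) = n := by have := mem_range.mp hk; omega
  simp only [f, hkn]
  ring

/-- The coefficient of `tⁿ` in `e_λ(−xt/(1−t)) = (1 − λxt/(1−t))^{1/λ}` is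
`(1/n!) ∑_{k=0}^n (−x)^k (1)_{k,λ} L(n,k)`. -/
theorem degExp_generating_lah (lam x t : ℝ) (hlam : lam ≠ 0)
    (ht : |t| < 1) (hxt : |lam * x * t| < 1 - |t|) :
    HasSum
      (fun n : ℕ =>
        ((1 / (Nat.factorial n : ℝ)) *
            ∑ k ∈ Finset.range (n + 1), (-x) ^ k * degFall lam k * lah n k) * t ^ n)
      ((1 - lam * x * t / (1 - t)) ^ (1 / lam)) := by
  have h1t : 0 < 1 - t := by linarith [le_abs_self t]
  have h1at : 0 < 1 - |t| := by linarith [abs_nonneg (lam * x * t)]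
  refine hasSum_lah_of_hasSum_div_one_sub ht ?_ ?_
  · have hu : |lam * (-x * t / (1 - t))| < 1 := by
      rw [show lam * (-x * t / (1 - t)) = -(lam * x * t) / (1 - t) by ring, abs_div, abs_neg,
        abs_of_pos h1t, div_lt_one h1t]
      linarith [le_abs_self t]
    have h := hasSum_degFall_div_factorial_mul_pow hlam hu
    rw [show 1 + lam * (-x * t / (1 - t)) = 1 - lam * x * t / (1 - t) by ring] at h
    exact h.congr_fun fun k ↦ by ring
  · have hu : |lam * (-x * |t| / (1 - |t|))| < 1 := by
      rw [show lam * (-x * |t| / (1 - |t|)) = -(lam * x * |t|) / (1 - |t|) by ring, abs_div,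
        abs_neg, abs_of_pos h1at, div_lt_one h1at]
      simpa only [abs_mul, abs_abs] using hxt
    refine (summable_abs_degFall_div_factorial_mul_pow hlam hu).congr fun k ↦ ?_
    simp only [abs_mul, abs_div, abs_pow, abs_neg, abs_abs, Nat.abs_cast, abs_of_pos h1at]
    ring
end

section
/- Let λ ∈ ℝ with λ ≠ 0 and n ∈ ℕ with n ≥ 1. For every x > 0 with x > |λ|, the n-th derivative at x of the function x ↦ (1 + λ/x)^{1/λ} equals (−1)^n · x^{−n} · (1 + λ/x)^{1/λ} · Σ_{l=0}^{n} L(n,l) · (1)_{l,λ} · (1/(x + λ))^{l}. -/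
/-!
With `f y = (1 + λ/y)^{1/λ}` and `u = 1/(y+λ)` one has `f' = -f/(y(y+λ))`, `u' = -u²` and
`y·u = 1 - λu`. So the derivative of `(-1)ⁿ y⁻ⁿ f(y) Pₙ(u)` is `(-1)ⁿ⁺¹ y⁻ⁿ⁻¹ f(y) Pₙ₊₁(u)` as soon as
`Pₙ₊₁(u) = (n + u) Pₙ(u) + u(1 - λu) Pₙ'(u)`. For `Pₙ(u) = ∑ₗ L(n,l) (1)_{l,λ} uˡ` this is,
coefficientwise, the Lah recurrence `L(n+1,l+1) = (n+l+1) L(n,l+1) + L(n,l)` combined with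
`(1)_{l+1,λ} = (1)_{l,λ} (1 - lλ)`. Induction on `n` then gives the formula on the open set
`ℝ ∖ {0, -λ}`, where iterated derivatives are determined locally.
-/

open Finset Real Set

lemma degFall_succ (lam : ℝ) (l : ℕ) :
    degFall lam (l + 1) = degFall lam l * (1 - l * lam) :=
  prod_range_succ _ _

lemma lah_zero_right {n : ℕ} (hn : n ≠ 0) : lah n 0 = 0 := by
  simp [lah, hn]

lemma lah_eq_zero_of_lt {n k : ℕ} (hn : n ≠ 0) (hnk : n < k) : lah n k = 0 := by
  simp [lah, hn, Nat.choose_eq_zero_of_lt (by omega : n - 1 < k - 1)]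

-- For `n = 0` the defining formula gives the junk value `lah 0 1 = 1`, and this fails.
lemma lah_succ_succ {n : ℕ} (hn : n ≠ 0) (l : ℕ) :
    lah (n + 1) (l + 1) = (n + l + 1) * lah n (l + 1) + lah n l := by
  obtain ⟨m, rfl⟩ := Nat.exists_eq_succ_of_ne_zero hn
  rcases l with _ | k
  · simp [lah, Nat.factorial_succ]
  · have absorb : ((m + 1) * m.choose k : ℝ) = (m.choose k + m.choose (k + 1)) * (k + 1) := by
      exact_mod_cast Nat.choose_succ_succ' m k ▸ Nat.add_one_mul_choose_eq m k
    simp only [lah, Nat.add_sub_cancel, Nat.add_eq_zero_iff, one_ne_zero, and_false, if_false,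
      Nat.choose_succ_succ', Nat.factorial_succ (m + 1), Nat.factorial_succ (k + 1)]
    push_cast
    field_simp
    linear_combination absorb

noncomputable def lahPoly (lam : ℝ) (n : ℕ) (u : ℝ) : ℝ :=
  ∑ l ∈ range (n + 1), lah n l * degFall lam l * u ^ l

lemma lahPoly_zero (lam u : ℝ) : lahPoly lam 0 u = 1 := by
  simp [lahPoly, lah, degFall]

-- The last sum is `u · Pₙ'(u)`.
lemma lahPoly_succ (lam : ℝ) (n : ℕ) (u : ℝ) :
    lahPoly lam (n + 1) u = (n + u) * lahPoly lam n u
      + (1 - lam * u) * ∑ l ∈ range (n + 1), l * (lah n l * degFall lam l) * u ^ l := by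
  obtain rfl | hn := eq_or_ne n 0
  · simp [lahPoly, lah, degFall, sum_range_succ]
  set c : ℕ → ℝ := fun l => lah n l * degFall lam l
  have shift : ∑ l ∈ range (n + 1), (n + l + 1) * c (l + 1) * u ^ (l + 1) =
      ∑ l ∈ range (n + 1), (n + l) * c l * u ^ l := by
    rw [sum_range_succ, sum_range_succ' (fun l => (n + l : ℝ) * c l * u ^ l)]
    simp only [c, lah_zero_right hn, lah_eq_zero_of_lt hn (Nat.lt_succ_self n), mul_zero,
      zero_mul, add_zero, Nat.cast_zero, Nat.cast_add, Nat.cast_one]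
    exact sum_congr rfl fun l _ => by ring
  have recur (l : ℕ) : lah (n + 1) (l + 1) * degFall lam (l + 1) * u ^ (l + 1) =
      (n + l + 1) * c (l + 1) * u ^ (l + 1) + c l * (1 - l * lam) * u ^ (l + 1) := by
    simp only [c, lah_succ_succ hn, degFall_succ]
    ring
  rw [lahPoly, sum_range_succ', lah_zero_right (Nat.succ_ne_zero n)]
  simp only [zero_mul, add_zero, recur]
  rw [sum_add_distrib, shift, lahPoly, mul_sum, mul_sum, ← sum_add_distrib, ← sum_add_distrib]
  refine sum_congr rfl fun l _ => ?_
  ring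

lemma hasDerivAt_inv_pow {x : ℝ} (hx : x ≠ 0) (l : ℕ) :
    HasDerivAt (fun y => y⁻¹ ^ l) (-(l * x⁻¹ ^ (l + 1))) x := by
  refine ((hasDerivAt_inv hx).fun_pow l).congr_deriv ?_
  rcases l with _ | l
  · simp
  · rw [Nat.add_sub_cancel, ← inv_pow]
    push_cast
    ring

lemma hasDerivAt_lahPoly_inv_add {lam x : ℝ} (hx : x + lam ≠ 0) (n : ℕ) :
    HasDerivAt (fun y => lahPoly lam n (y + lam)⁻¹)
      (-((x + lam)⁻¹ * ∑ l ∈ range (n + 1), l * (lah n l * degFall lam l) * (x + lam)⁻¹ ^ l)) x := by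
  unfold lahPoly
  refine (HasDerivAt.fun_sum fun l _ =>
    ((hasDerivAt_inv_pow hx l).comp_add_const x lam).const_mul (lah n l * degFall lam l)).congr_deriv ?_
  rw [mul_sum, ← sum_neg_distrib]
  exact sum_congr rfl fun l _ => by ring

lemma hasDerivAt_rpow_one_add_div {lam x : ℝ} (hlam : lam ≠ 0) (hx : x ≠ 0) (hxl : x + lam ≠ 0) :
    HasDerivAt (fun y => (1 + lam / y) ^ (1 / lam))
      (-((1 + lam / x) ^ (1 / lam) / (x * (x + lam)))) x := by
  have hbase : 1 + lam / x ≠ 0 := by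
    rw [one_add_div hx]; exact div_ne_zero hxl hx
  have hinner : HasDerivAt (fun y => 1 + lam / y) (-(lam / x ^ 2)) x := by
    simpa [div_eq_mul_inv] using ((hasDerivAt_inv hx).const_mul lam).const_add 1
  convert hinner.rpow_const (p := 1 / lam) (Or.inl hbase) using 1
  rw [rpow_sub_one hbase]
  field_simp

noncomputable def degExpInvDeriv (lam : ℝ) (n : ℕ) (y : ℝ) : ℝ :=
  (-1) ^ n * y⁻¹ ^ n * (1 + lam / y) ^ (1 / lam) * lahPoly lam n (y + lam)⁻¹

lemma hasDerivAt_degExpInvDeriv {lam x : ℝ} (hlam : lam ≠ 0) (hx : x ≠ 0) (hxl : x + lam ≠ 0)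
    (n : ℕ) : HasDerivAt (degExpInvDeriv lam n) (degExpInvDeriv lam (n + 1) x) x := by
  refine ((((hasDerivAt_inv_pow hx n).const_mul ((-1) ^ n)).mul
    (hasDerivAt_rpow_one_add_div hlam hx hxl)).mul (hasDerivAt_lahPoly_inv_add hxl n)).congr_deriv ?_
  have hu : 1 - lam * (x + lam)⁻¹ = x * (x + lam)⁻¹ := by field_simp; ring
  simp only [degExpInvDeriv, Pi.mul_apply, lahPoly_succ, hu, pow_succ]
  generalize x⁻¹ ^ n = Q
  field_simp
  ring

theorem eqOn_iteratedDeriv_degExpInvDeriv {lam : ℝ} (hlam : lam ≠ 0) (n : ℕ) :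
    EqOn (iteratedDeriv n fun y => (1 + lam / y) ^ (1 / lam)) (degExpInvDeriv lam n) {0, -lam}ᶜ := by
  induction n with
  | zero => intro y _; simp [degExpInvDeriv, lahPoly_zero]
  | succ n ih =>
    intro x hx
    have hopen : IsOpen ({0, -lam}ᶜ : Set ℝ) := (toFinite _).isClosed.isOpen_compl
    have hx' : x ≠ 0 ∧ x + lam ≠ 0 := by
      simpa [not_or, ← eq_neg_iff_add_eq_zero] using hx
    rw [iteratedDeriv_succ, (ih.eventuallyEq_of_mem (hopen.mem_nhds hx)).deriv_eq,
      (hasDerivAt_degExpInvDeriv hlam hx'.1 hx'.2 n).deriv]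

theorem iteratedDeriv_degExp_inv_general (lam : ℝ) (hlam : lam ≠ 0) (n : ℕ) :
    ∀ x : ℝ, 0 < x → |lam| < x →
      iteratedDeriv n (fun y : ℝ => (1 + lam / y) ^ (1 / lam)) x =
        (-1 : ℝ) ^ n * x ^ (-(n : ℝ)) * (1 + lam / x) ^ (1 / lam) *
          ∑ l ∈ Finset.range (n + 1), lah n l * degFall lam l * (1 / (x + lam)) ^ l := by
  intro x hx0 hx
  have hxl : x + lam ≠ 0 := by linarith [neg_abs_le lam]
  have hx_mem : x ∈ ({0, -lam}ᶜ : Set ℝ) := by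
    simpa [not_or, hx0.ne', ← eq_neg_iff_add_eq_zero] using hxl
  rw [eqOn_iteratedDeriv_degExpInvDeriv hlam n hx_mem, degExpInvDeriv, lahPoly,
    rpow_neg hx0.le, rpow_natCast, inv_pow]
  simp only [one_div]

/-- Theorem 5: for `n ≥ 1`,
`dⁿ/dxⁿ e_λ(1/x) = (−1)ⁿ x^{−n} e_λ(1/x) ∑_{l=0}^n L(n,l) (1)_{l,λ} (1/(x+λ))^l`,
where `e_λ(1/x) = (1 + λ/x)^{1/λ}`. -/
theorem iteratedDeriv_degExp_inv (lam : ℝ) (hlam : lam ≠ 0) (n : ℕ) (hn : 1 ≤ n) :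
    ∀ x : ℝ, 0 < x → |lam| < x →
      iteratedDeriv n (fun y : ℝ => (1 + lam / y) ^ (1 / lam)) x =
        (-1 : ℝ) ^ n * x ^ (-(n : ℝ)) * (1 + lam / x) ^ (1 / lam) *
          ∑ l ∈ Finset.range (n + 1), lah n l * degFall lam l * (1 / (x + lam)) ^ l :=
  iteratedDeriv_degExp_inv_general lam hlam n
end

section
/- Let λ ∈ ℝ, α ∈ ℝ, and n ∈ ℕ with n ≥ 1. Then for every x ∈ ℝ: (d/dx) L^{(α)}_{n,λ}(x) = (1 + x·λ)·(d/dx) L^{(α)}_{n−1,λ}(x) − L^{(α)}_{n−1,λ}(x). -/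
/-- Generalized binomial coefficient `binom(n+α, n−m) = (∏_{j=0}^{n−m−1} (n+α−j))/(n−m)!`. -/
noncomputable def genBinom (α : ℝ) (n m : ℕ) : ℝ :=
  (∏ j ∈ Finset.range (n - m), ((n : ℝ) + α - (j : ℝ))) / (Nat.factorial (n - m) : ℝ)

/-- The degenerate generalized Laguerre polynomial `L^{(α)}_{n,λ}(x)`. -/
noncomputable def degLaguerre (lam α : ℝ) (n : ℕ) (x : ℝ) : ℝ :=
  ∑ m ∈ Finset.range (n + 1),
    genBinom α n m * (-1 : ℝ) ^ m * degFall lam m * x ^ m / (Nat.factorial m : ℝ)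

open Finset

open Polynomial in
theorem Ring.choose_eq_prod_range_div {K : Type*} [Field K] [CharZero K] (r : K) (k : ℕ) :
    Ring.choose r k = (∏ j ∈ range k, (r - j)) / k.factorial := by
  rw [Ring.choose_eq_smul, ← aeval_eq_smeval, aeval_def, eval₂_eq_eval_map, descPochhammer_map,
    descPochhammer_eval_eq_prod_range, smul_eq_mul, div_eq_inv_mul]

theorem genBinom_eq_choose (α : ℝ) (n m : ℕ) :
    genBinom α n m = Ring.choose ((n : ℝ) + α) (n - m) := by
  rw [genBinom, Ring.choose_eq_prod_range_div]

theorem genBinom_succ_succ (α : ℝ) {n k : ℕ} (hk : k < n) :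
    genBinom α (n + 1) (k + 1) = genBinom α n (k + 1) + genBinom α n k := by
  obtain ⟨s, hs⟩ := Nat.exists_eq_add_of_lt hk
  simp only [genBinom_eq_choose, show n + 1 - (k + 1) = s + 1 by omega,
    show n - (k + 1) = s by omega, show n - k = s + 1 by omega]
  rw [Nat.cast_succ, add_right_comm, Ring.choose_succ_succ]

theorem genBinom_self (α : ℝ) (n : ℕ) : genBinom α n n = 1 := by
  simp [genBinom]

/-- The top term `k = n` is handled by `genBinom_self`, not by Pascal's rule, since truncated
subtraction makes `genBinom α n (n + 1) = 1` rather than `0`. -/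
theorem sum_genBinom_succ_succ_mul (α : ℝ) (n : ℕ) (f : ℕ → ℝ) :
    ∑ k ∈ range (n + 1), genBinom α (n + 1) (k + 1) * f k =
      ∑ k ∈ range n, genBinom α n (k + 1) * f k + ∑ k ∈ range (n + 1), genBinom α n k * f k := by
  rw [sum_range_succ, sum_range_succ _ n, genBinom_self, genBinom_self, ← add_assoc,
    ← sum_add_distrib]
  congr 1
  refine sum_congr rfl fun k hk => ?_
  rw [genBinom_succ_succ α (mem_range.mp hk), add_mul]

theorem hasDerivAt_sum_mul_pow (a : ℕ → ℝ) (N : ℕ) (x : ℝ) :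
    HasDerivAt (fun y => ∑ m ∈ range (N + 1), a m * y ^ m)
      (∑ k ∈ range N, (k + 1) * a (k + 1) * x ^ k) x := by
  refine (HasDerivAt.fun_sum fun m _ => (hasDerivAt_pow m x).const_mul (a m)).congr_deriv ?_
  rw [sum_range_succ']
  simp only [Nat.cast_zero, zero_mul, mul_zero, add_zero, Nat.cast_succ, add_tsub_cancel_right]
  exact sum_congr rfl fun k _ => by ring

theorem mul_sum_range_succ_mul_pow (a : ℕ → ℝ) (N : ℕ) (x : ℝ) :
    x * ∑ k ∈ range N, (k + 1) * a (k + 1) * x ^ k = ∑ m ∈ range (N + 1), m * a m * x ^ m := by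
  rw [sum_range_succ', mul_sum]
  simp only [Nat.cast_zero, zero_mul, add_zero, Nat.cast_succ]
  exact sum_congr rfl fun k _ => by ring

noncomputable def degLaguerreWeight (lam : ℝ) (m : ℕ) : ℝ :=
  (-1) ^ m * degFall lam m / m.factorial

theorem succ_mul_degLaguerreWeight_succ (lam : ℝ) (m : ℕ) :
    (m + 1) * degLaguerreWeight lam (m + 1) = (m * lam - 1) * degLaguerreWeight lam m := by
  rw [degLaguerreWeight, degLaguerreWeight, degFall, prod_range_succ, ← degFall,
    Nat.factorial_succ, Nat.cast_mul, pow_succ]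
  field_simp
  push_cast
  ring

theorem degLaguerre_eq_sum (lam α : ℝ) (n : ℕ) :
    degLaguerre lam α n =
      fun x => ∑ m ∈ range (n + 1), genBinom α n m * degLaguerreWeight lam m * x ^ m := by
  ext x
  exact sum_congr rfl fun m _ => by rw [degLaguerreWeight]; ring

theorem hasDerivAt_degLaguerre (lam α : ℝ) (n : ℕ) (x : ℝ) :
    HasDerivAt (degLaguerre lam α n)
      (∑ k ∈ range n, genBinom α n (k + 1) * ((k * lam - 1) * degLaguerreWeight lam k * x ^ k))
      x := by
  rw [degLaguerre_eq_sum]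
  convert hasDerivAt_sum_mul_pow (fun m => genBinom α n m * degLaguerreWeight lam m) n x using 1
  exact sum_congr rfl fun k _ => by
    linear_combination -(genBinom α n (k + 1) * x ^ k) * succ_mul_degLaguerreWeight_succ lam k

theorem lam_mul_mul_deriv_degLaguerre_sub (lam α : ℝ) (n : ℕ) (x : ℝ) :
    lam * (x * deriv (degLaguerre lam α n) x) - degLaguerre lam α n x =
      ∑ k ∈ range (n + 1), genBinom α n k * ((k * lam - 1) * degLaguerreWeight lam k * x ^ k) := by
  rw [degLaguerre_eq_sum, (hasDerivAt_sum_mul_pow _ n x).deriv,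
    mul_sum_range_succ_mul_pow (fun m => genBinom α n m * degLaguerreWeight lam m),
    mul_sum, ← sum_sub_distrib]
  exact sum_congr rfl fun k _ => by ring

/-- Corollary 7, first identity:
`(d/dx) L^{(α)}_{n,λ}(x) = (1 + xλ) (d/dx) L^{(α)}_{n−1,λ}(x) − L^{(α)}_{n−1,λ}(x)` for `n ≥ 1`. -/
theorem degLaguerre_deriv_recurrence (lam α : ℝ) (n : ℕ) (hn : 1 ≤ n) (x : ℝ) :
    deriv (degLaguerre lam α n) x =
      (1 + x * lam) * deriv (degLaguerre lam α (n - 1)) x - degLaguerre lam α (n - 1) x := by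
  obtain ⟨p, rfl⟩ := Nat.exists_eq_add_of_le' hn
  rw [Nat.add_sub_cancel, (hasDerivAt_degLaguerre lam α (p + 1) x).deriv,
    sum_genBinom_succ_succ_mul, ← (hasDerivAt_degLaguerre lam α p x).deriv,
    ← lam_mul_mul_deriv_degLaguerre_sub]
  ring
end
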